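/- arXiv:2604.19739 — 6 statements merged into one kernel-verified Lean document; each statement's English description precedes it below -/
import Mathlib

section
/- Let (X,d,μ) be an η-Ahlfors regular quasi-metric measure space with η > 0 and triangular constant κ ≥ 1, let ρ be the third order hypermetric induced by d, and let 0 < γ < 2η. Then for every pair f, g of nonnegative measurable functions on X and every x ∈ X, T^γ(f,g)(x) ≤ (2κ)^γ (I_{η−γ/2}f)(x) · (I_{η−γ/2}g)(x). -/
open MeasureTheory ENNReal

/-- The third order hypermetric induced by `d`:
`ρ(x,y,z) = inf_{u ∈ X} max {d(x,u), d(y,u), d(z,u)}`. -/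
noncomputable def hyperRho {X : Type*} (d : X → X → ℝ) (x y z : X) : ℝ :=
  ⨅ u : X, max (d x u) (max (d y u) (d z u))

/-- `d` is a quasi-metric on `X` with triangular constant `κ`. -/
def IsQuasiMetric {X : Type*} (d : X → X → ℝ) (κ : ℝ) : Prop :=
  (∀ x y, 0 ≤ d x y) ∧ (∀ x y, (d x y = 0 ↔ x = y)) ∧ (∀ x y, d x y = d y x) ∧
    (∀ x y z, d x z ≤ κ * (d x y + d y z))

/-- `(X,d,μ)` is `η`-Ahlfors regular with constants `a ≤ A`. -/
def IsAhlfors {X : Type*} [MeasurableSpace X] (d : X → X → ℝ) (μ : Measure X)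
    (η a A : ℝ) : Prop :=
  ∀ x : X, ∀ r : ℝ, 0 < r →
    ENNReal.ofReal (a * r ^ η) ≤ μ {y | d x y < r} ∧
      μ {y | d x y < r} ≤ ENNReal.ofReal (A * r ^ η)

/-- The bilinear fractional integral operator
`T^γ(f,g)(x) = ∬ f(y) g(z) ρ(x,y,z)^{-γ} dμ(y) dμ(z)`
(with the convention `0 ^ (-γ) = ∞` for `γ > 0`, as in `ENNReal.rpow`). -/
noncomputable def Tgamma {X : Type*} [MeasurableSpace X] (d : X → X → ℝ)
    (μ : Measure X) (γ : ℝ) (f g : X → ℝ≥0∞) (x : X) : ℝ≥0∞ :=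
  ∫⁻ y, ∫⁻ z, f y * g z * (ENNReal.ofReal (hyperRho d x y z)) ^ (-γ) ∂μ ∂μ

/-- The linear fractional integral operator of order `β` in the `η`-dimensional
space `(X,d,μ)`: `I_β h(x) = ∫ h(y) d(x,y)^{β-η} dμ(y)`. -/
noncomputable def fracInt {X : Type*} [MeasurableSpace X] (d : X → X → ℝ)
    (μ : Measure X) (β η : ℝ) (h : X → ℝ≥0∞) (x : X) : ℝ≥0∞ :=
  ∫⁻ y, h y * (ENNReal.ofReal (d x y)) ^ (β - η) ∂μ

/-- The `L^p(μ)` norm of a nonnegative function, `p` a real exponent. -/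
noncomputable def lpNorm {X : Type*} [MeasurableSpace X] (μ : Measure X) (p : ℝ)
    (h : X → ℝ≥0∞) : ℝ≥0∞ :=
  (∫⁻ x, (h x) ^ p ∂μ) ^ (1 / p)

/-
For every `u`, the quasi-triangle inequality through `u` gives
`d(x,y) ≤ κ (d(x,u) + d(u,y)) ≤ 2κ max {d(x,u), d(y,u), d(z,u)}`, so `d(x,y) ≤ 2κ ρ(x,y,z)`,
and likewise `d(x,z) ≤ 2κ ρ(x,y,z)`. Hence
`ρ(x,y,z)^{-γ} ≤ (2κ)^γ d(x,y)^{-γ/2} d(x,z)^{-γ/2}`, and integrating this kernel bound against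
`f(y) g(z)` splits the double integral into the product of the two fractional integrals.
-/

theorem ENNReal.rpow_neg_le_of_le_mul {K R D : ℝ≥0∞} (hK0 : K ≠ 0) (hKt : K ≠ ∞) {p : ℝ}
    (hp : 0 ≤ p) (hD : D ≤ K * R) : R ^ (-p) ≤ K ^ p * D ^ (-p) := by
  rw [ENNReal.rpow_neg, ENNReal.rpow_neg, ← ENNReal.inv_rpow, ← ENNReal.inv_rpow,
    ← ENNReal.mul_rpow_of_nonneg _ _ hp, ← div_eq_mul_inv]
  refine ENNReal.rpow_le_rpow ?_ hp
  rw [ENNReal.le_div_iff_mul_le (Or.inr hK0) (Or.inr hKt), mul_comm, ← div_eq_mul_inv]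
  exact ENNReal.div_le_of_le_mul hD

namespace IsQuasiMetric

variable {X : Type*} {d : X → X → ℝ} {κ : ℝ}

theorem le_two_mul_hyperRho (hd : IsQuasiMetric d κ) (hκ : 0 < κ) {x y z w : X}
    (hw : ∀ u, d w u ≤ max (d y u) (d z u)) : d x w ≤ 2 * κ * hyperRho d x y z := by
  obtain ⟨-, -, hsymm, htri⟩ := hd
  rw [← div_le_iff₀' (by positivity)]
  have : Nonempty X := ⟨x⟩
  refine le_ciInf fun u => ?_
  have hxu : d x u ≤ max (d x u) (max (d y u) (d z u)) := le_max_left _ _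
  have hwu : d w u ≤ max (d x u) (max (d y u) (d z u)) := (hw u).trans (le_max_right _ _)
  rw [div_le_iff₀' (by positivity)]
  nlinarith [htri x u w, hsymm u w]

theorem ofReal_hyperRho_rpow_neg_le (hd : IsQuasiMetric d κ) (hκ : 0 < κ) {γ : ℝ}
    (hγ : 0 ≤ γ) (x y z : X) :
    ENNReal.ofReal (hyperRho d x y z) ^ (-γ) ≤
      ENNReal.ofReal ((2 * κ) ^ γ) *
        (ENNReal.ofReal (d x y) ^ (-(γ / 2)) * ENNReal.ofReal (d x z) ^ (-(γ / 2))) := by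
  set K := ENNReal.ofReal (2 * κ)
  set R := ENNReal.ofReal (hyperRho d x y z)
  have hK0 : K ≠ 0 := by simp [K, hκ]
  have hp : 0 ≤ γ / 2 := by positivity
  have hy : ENNReal.ofReal (d x y) ≤ K * R := by
    rw [← ENNReal.ofReal_mul (by positivity)]
    exact ENNReal.ofReal_le_ofReal (hd.le_two_mul_hyperRho hκ fun _ => le_max_left _ _)
  have hz : ENNReal.ofReal (d x z) ≤ K * R := by
    rw [← ENNReal.ofReal_mul (by positivity)]
    exact ENNReal.ofReal_le_ofReal (hd.le_two_mul_hyperRho hκ fun _ => le_max_right _ _)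
  calc R ^ (-γ) = R ^ (-(γ / 2)) * R ^ (-(γ / 2)) := by
        rw [← sq, ← ENNReal.rpow_natCast, ← ENNReal.rpow_mul]
        ring_nf
    _ ≤ K ^ (γ / 2) * ENNReal.ofReal (d x y) ^ (-(γ / 2)) *
          (K ^ (γ / 2) * ENNReal.ofReal (d x z) ^ (-(γ / 2))) :=
        mul_le_mul' (ENNReal.rpow_neg_le_of_le_mul hK0 ENNReal.ofReal_ne_top hp hy)
          (ENNReal.rpow_neg_le_of_le_mul hK0 ENNReal.ofReal_ne_top hp hz)
    _ = K ^ (γ / 2) * K ^ (γ / 2) *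
          (ENNReal.ofReal (d x y) ^ (-(γ / 2)) * ENNReal.ofReal (d x z) ^ (-(γ / 2))) := by ring
    _ = _ := by
        rw [← ENNReal.rpow_add_of_nonneg _ _ hp hp, add_halves,
          ENNReal.ofReal_rpow_of_nonneg (by positivity) hγ]

end IsQuasiMetric

theorem statement6_general {X : Type*} [MeasurableSpace X]
    (d : X → X → ℝ) (κ : ℝ) (hκ : 1 ≤ κ) (hqm : IsQuasiMetric d κ)
    (hd_meas : Measurable fun p : X × X => d p.1 p.2)
    (μ : Measure X) (η : ℝ)
    (γ : ℝ) (hγ0 : 0 < γ)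
    (f g : X → ℝ≥0∞) (hf : Measurable f) (hg : Measurable g) (x : X) :
    Tgamma d μ γ f g x ≤
      ENNReal.ofReal ((2 * κ) ^ γ) *
        (fracInt d μ (η - γ / 2) η f x * fracInt d μ (η - γ / 2) η g x) := by
  set w : X → ℝ≥0∞ := fun y => ENNReal.ofReal (d x y) ^ (-(γ / 2))
  have hw : Measurable w :=
    ((hd_meas.comp measurable_prodMk_left).ennreal_ofReal).pow_const _
  have hexp : η - γ / 2 - η = -(γ / 2) := by ring
  calc Tgamma d μ γ f g x
      ≤ ∫⁻ y, ∫⁻ z, ENNReal.ofReal ((2 * κ) ^ γ) * (f y * w y * (g z * w z)) ∂μ ∂μ := by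
        refine lintegral_mono fun y => lintegral_mono fun z => ?_
        calc f y * g z * ENNReal.ofReal (hyperRho d x y z) ^ (-γ)
            ≤ f y * g z * (ENNReal.ofReal ((2 * κ) ^ γ) * (w y * w z)) :=
              mul_le_mul_right (hqm.ofReal_hyperRho_rpow_neg_le (by linarith) hγ0.le x y z) _
          _ = _ := by ring
    _ = ENNReal.ofReal ((2 * κ) ^ γ) *
          (fracInt d μ (η - γ / 2) η f x * fracInt d μ (η - γ / 2) η g x) := by
        simp only [lintegral_const_mul' _ _ ENNReal.ofReal_ne_top, fracInt, hexp]
        exact congrArg _ (lintegral_lintegral_mul (f := fun y => f y * w y)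
          (g := fun z => g z * w z) (hf.mul hw).aemeasurable (hg.mul hw).aemeasurable)

/-- Pointwise bound `T^γ(f,g)(x) ≤ (2κ)^γ (I_{η-γ/2}f)(x) · (I_{η-γ/2}g)(x)`. -/
theorem statement6 {X : Type*} [MeasurableSpace X]
    (d : X → X → ℝ) (κ : ℝ) (hκ : 1 ≤ κ) (hqm : IsQuasiMetric d κ)
    (hd_meas : Measurable fun p : X × X => d p.1 p.2)
    (μ : Measure X) (η : ℝ) (hη : 0 < η)
    (a A : ℝ) (ha : 0 < a) (haA : a ≤ A) (hAhl : IsAhlfors d μ η a A)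
    (γ : ℝ) (hγ0 : 0 < γ) (hγ2η : γ < 2 * η)
    (f g : X → ℝ≥0∞) (hf : Measurable f) (hg : Measurable g) (x : X) :
    Tgamma d μ γ f g x ≤
      ENNReal.ofReal ((2 * κ) ^ γ) *
        (fracInt d μ (η - γ / 2) η f x * fracInt d μ (η - γ / 2) η g x) :=
  statement6_general d κ hκ hqm hd_meas μ η γ hγ0 f g hf hg x
end

section
/- Let (X,d,μ) be an η-Ahlfors regular quasi-metric measure space with η > 0 and triangular constant κ ≥ 1, let ρ be the third order hypermetric induced by d, and let 0 < γ < 2η. Then for every pair f, g of nonnegative measurable functions on X and every x ∈ X, T^γ(f,g)(x) ≤ (2κ)^γ I_{η−γ/2}(g · I_{η−γ/2}f)(x). -/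
open MeasureTheory ENNReal

/-!
For every `u`, the quasi-triangle inequality bounds both `d(x,z)` and `d(z,y)` by
`2κ max {d(x,u), d(y,u), d(z,u)}`, hence `ρ(x,y,z)^{-γ} ≤ (2κ)^γ d(z,y)^{-γ/2} d(x,z)^{-γ/2}`.
Integrating against `f(y) g(z)` and exchanging the order of integration (Tonelli, available since
Ahlfors regularity makes `μ` σ-finite) turns the right-hand side into the iterated fractional
integral.
-/

theorem sigmaFinite_of_measure_sublevel_ne_top {X : Type*} [MeasurableSpace X] {μ : Measure X}
    (φ : X → ℝ) (h : ∀ r, 0 < r → μ {y | φ y < r} ≠ ∞) : SigmaFinite μ := by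
  refine ⟨⟨⟨fun n : ℕ => {y | φ y < n + 1}, fun _ => trivial,
    fun n => (h _ n.cast_add_one_pos).lt_top, Set.eq_univ_of_forall fun y => ?_⟩⟩⟩
  obtain ⟨n, hn⟩ := exists_nat_gt (φ y)
  exact Set.mem_iUnion.2 ⟨n, (hn.trans (lt_add_one _) : φ y < n + 1)⟩

theorem IsAhlfors.sigmaFinite {X : Type*} [MeasurableSpace X] [Nonempty X] {d : X → X → ℝ}
    {μ : Measure X} {η a A : ℝ} (h : IsAhlfors d μ η a A) : SigmaFinite μ :=
  sigmaFinite_of_measure_sublevel_ne_top (d (Classical.arbitrary X)) fun r hr =>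
    ne_top_of_le_ne_top ofReal_ne_top (h _ r hr).2

theorem ENNReal.rpow_neg_le_mul_rpow_neg_mul_rpow_neg {a b r K : ℝ≥0∞} (hK0 : K ≠ 0)
    (hK : K ≠ ∞) {γ : ℝ} (hγ : 0 ≤ γ) (ha : a ≤ K * r) (hb : b ≤ K * r) :
    r ^ (-γ) ≤ K ^ γ * (a ^ (-(γ / 2)) * b ^ (-(γ / 2))) := by
  have antitone {c : ℝ≥0∞} (hc : c ≤ K * r) : (K * r) ^ (-(γ / 2)) ≤ c ^ (-(γ / 2)) := by
    rw [rpow_neg, rpow_neg]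
    exact ENNReal.inv_le_inv.2 (rpow_le_rpow hc (by positivity))
  have halves (t : ℝ≥0∞) : t ^ (-γ) = t ^ (-(γ / 2)) * t ^ (-(γ / 2)) := by
    rw [← sq, ← rpow_two, ← rpow_mul]
    ring_nf
  calc r ^ (-γ) = K ^ γ * (K ^ (-γ) * r ^ (-γ)) := by
        rw [← mul_assoc, rpow_neg K, ENNReal.mul_inv_cancel (by positivity) (by finiteness),
          one_mul]
    _ = K ^ γ * ((K * r) ^ (-(γ / 2)) * (K * r) ^ (-(γ / 2))) := by
        rw [← halves]
        simp [mul_rpow_eq_ite, hK0, hK]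
    _ ≤ K ^ γ * (a ^ (-(γ / 2)) * b ^ (-(γ / 2))) := by
        gcongr _ * (?_ * ?_)
        exacts [antitone ha, antitone hb]

section QuasiMetric

variable {X : Type*} {d : X → X → ℝ} {κ : ℝ}

theorem IsQuasiMetric.le_two_mul_max (hd : IsQuasiMetric d κ) (hκ : 0 ≤ κ) (p q u : X) :
    d p q ≤ 2 * κ * max (d p u) (d q u) := by
  obtain ⟨-, -, hsymm, htri⟩ := hd
  calc d p q ≤ κ * (d p u + d q u) := hsymm u q ▸ htri p u q
    _ ≤ κ * (max (d p u) (d q u) + max (d p u) (d q u)) := by gcongr <;> simp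
    _ = 2 * κ * max (d p u) (d q u) := by ring

/-- `hpq` holds whenever `p, q ∈ {x, y, z}`. -/
theorem IsQuasiMetric.le_two_mul_hyperRho_s8 (hd : IsQuasiMetric d κ) (hκ : 0 ≤ κ) {x y z p q : X}
    (hpq : ∀ u, max (d p u) (d q u) ≤ max (d x u) (max (d y u) (d z u))) :
    d p q ≤ 2 * κ * hyperRho d x y z := by
  have : Nonempty X := ⟨x⟩
  rw [hyperRho, Real.mul_iInf_of_nonneg (by positivity)]
  exact le_ciInf fun u =>
    (hd.le_two_mul_max hκ p q u).trans (mul_le_mul_of_nonneg_left (hpq u) (by positivity))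

theorem IsQuasiMetric.ofReal_hyperRho_rpow_neg_le_s8 (hd : IsQuasiMetric d κ) (hκ : 0 < κ)
    {γ : ℝ} (hγ : 0 ≤ γ) (x y z : X) :
    ENNReal.ofReal (hyperRho d x y z) ^ (-γ) ≤ ENNReal.ofReal ((2 * κ) ^ γ) *
      (ENNReal.ofReal (d z y) ^ (-(γ / 2)) * ENNReal.ofReal (d x z) ^ (-(γ / 2))) := by
  have h2κ : 0 < 2 * κ := by positivity
  have bound {p q : X} (hpq : ∀ u, max (d p u) (d q u) ≤ max (d x u) (max (d y u) (d z u))) :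
      ENNReal.ofReal (d p q) ≤ ENNReal.ofReal (2 * κ) * ENNReal.ofReal (hyperRho d x y z) := by
    rw [← ENNReal.ofReal_mul h2κ.le]
    exact ENNReal.ofReal_le_ofReal (hd.le_two_mul_hyperRho_s8 hκ.le hpq)
  rw [← ENNReal.ofReal_rpow_of_pos h2κ]
  exact ENNReal.rpow_neg_le_mul_rpow_neg_mul_rpow_neg (by simpa using h2κ) ofReal_ne_top hγ
    (bound fun _ => max_le (by simp) (by simp)) (bound fun _ => max_le (by simp) (by simp))

end QuasiMetric

section FractionalIntegral

variable {X : Type*} [MeasurableSpace X] {μ : Measure X} [SFinite μ] {d : X → X → ℝ}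

theorem fracInt_mul_fracInt_eq_lintegral_lintegral
    (hd : Measurable fun p : X × X => d p.1 p.2) {f g : X → ℝ≥0∞} (hf : Measurable f)
    (hg : Measurable g) (β η : ℝ) (x : X) :
    fracInt d μ β η (fun z => g z * fracInt d μ β η f z) x =
      ∫⁻ y, ∫⁻ z, f y * g z *
        (ENNReal.ofReal (d z y) ^ (β - η) * ENNReal.ofReal (d x z) ^ (β - η)) ∂μ ∂μ := by
  rw [lintegral_lintegral_swap (by fun_prop)]
  refine lintegral_congr fun z => ?_
  simp only [fracInt]
  rw [← lintegral_const_mul _ (by fun_prop), ← lintegral_mul_const _ (by fun_prop)]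
  exact lintegral_congr fun y => by ring

end FractionalIntegral

theorem statement8_general {X : Type*} [MeasurableSpace X]
    (d : X → X → ℝ) (κ : ℝ) (hκ : 1 ≤ κ) (hqm : IsQuasiMetric d κ)
    (hd_meas : Measurable fun p : X × X => d p.1 p.2)
    (μ : Measure X) (η : ℝ)
    (a A : ℝ) (hAhl : IsAhlfors d μ η a A)
    (γ : ℝ) (hγ0 : 0 < γ)
    (f g : X → ℝ≥0∞) (hf : Measurable f) (hg : Measurable g) (x : X) :
    Tgamma d μ γ f g x ≤
      ENNReal.ofReal ((2 * κ) ^ γ) *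
        fracInt d μ (η - γ / 2) η
          (fun z => g z * fracInt d μ (η - γ / 2) η f z) x := by
  have : Nonempty X := ⟨x⟩
  have := hAhl.sigmaFinite
  rw [fracInt_mul_fracInt_eq_lintegral_lintegral hd_meas hf hg, sub_sub_cancel_left,
    ← lintegral_const_mul' _ _ ofReal_ne_top]
  refine lintegral_mono fun y => ?_
  rw [← lintegral_const_mul' _ _ ofReal_ne_top]
  refine lintegral_mono fun z => ?_
  calc f y * g z * ENNReal.ofReal (hyperRho d x y z) ^ (-γ)
      ≤ f y * g z * (ENNReal.ofReal ((2 * κ) ^ γ) *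
          (ENNReal.ofReal (d z y) ^ (-(γ / 2)) * ENNReal.ofReal (d x z) ^ (-(γ / 2)))) := by
        gcongr
        exact hqm.ofReal_hyperRho_rpow_neg_le_s8 (by linarith) hγ0.le x y z
    _ = _ := by ring

/-- Pointwise bound `T^γ(f,g)(x) ≤ (2κ)^γ I_{η-γ/2}(g · I_{η-γ/2}f)(x)`. -/
theorem statement8 {X : Type*} [MeasurableSpace X]
    (d : X → X → ℝ) (κ : ℝ) (hκ : 1 ≤ κ) (hqm : IsQuasiMetric d κ)
    (hd_meas : Measurable fun p : X × X => d p.1 p.2)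
    (μ : Measure X) (η : ℝ) (hη : 0 < η)
    (a A : ℝ) (ha : 0 < a) (haA : a ≤ A) (hAhl : IsAhlfors d μ η a A)
    (γ : ℝ) (hγ0 : 0 < γ) (hγ2η : γ < 2 * η)
    (f g : X → ℝ≥0∞) (hf : Measurable f) (hg : Measurable g) (x : X) :
    Tgamma d μ γ f g x ≤
      ENNReal.ofReal ((2 * κ) ^ γ) *
        fracInt d μ (η - γ / 2) η
          (fun z => g z * fracInt d μ (η - γ / 2) η f z) x :=
  statement8_general d κ hκ hqm hd_meas μ η a A hAhl γ hγ0 f g hf hg x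
end

section
/- Let (X,d,μ) be an η-Ahlfors regular quasi-metric measure space with η > 0, triangular constant κ ≥ 1 and Ahlfors constants 0 < a ≤ A < ∞, and let ρ be the third order hypermetric induced by d. Let φ : (0,∞) → [0,∞) be nonincreasing. Then for every λ > 1 and every x ∈ X, ∬_{X×X} φ(ρ(x,y,z)) dμ(y) dμ(z) ≤ (λ^{4η} / log λ) · A² (2κ)^{2η} · ∫₀^∞ φ(t) t^{2η−1} dt. -/
/-!
The quasi-triangle inequality through any `u` gives `max (d x y) (d x z) ≤ 2κ ρ(x,y,z)`; the point
`y = x`, where this bound degenerates, is `μ`-null by the upper Ahlfors bound. Split the pairs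
`(y,z)` into the `λ`-adic shells `λ^k ≤ max (d x y) (d x z) < λ^(k+1)`: there
`φ(ρ) ≤ φ(λ^k / 2κ)`, and the shell lies in `B(x, λ^(k+1))²`, of measure at most
`A² λ^(2(k+1)η)`. On `(λ^(k-1)/2κ, λ^k/2κ]`, an interval of `dt/t`-measure `log λ`, one has
`φ(t) t^(2η) ≥ φ(λ^k/2κ) (λ^(k-1)/2κ)^(2η)`, so each shell term is at most the stated constant
times the integral of `φ(t) t^(2η-1)` over that interval, and these intervals are disjoint.
-/

open MeasureTheory ENNReal

open Set Filter Topology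

namespace IsQuasiMetric

variable {X : Type*} {d : X → X → ℝ} {κ : ℝ}

theorem le_two_mul_max_s10 (h : IsQuasiMetric d κ) (hκ : 0 ≤ κ) (x y u : X) :
    d x y ≤ 2 * κ * max (d x u) (d y u) := by
  obtain ⟨-, -, hsymm, htri⟩ := h
  calc d x y ≤ κ * (d x u + d y u) := hsymm u y ▸ htri x u y
    _ ≤ κ * (max (d x u) (d y u) + max (d x u) (d y u)) := by
        gcongr
        exacts [le_max_left _ _, le_max_right _ _]
    _ = 2 * κ * max (d x u) (d y u) := by ring

theorem max_div_le_hyperRho (h : IsQuasiMetric d κ) (hκ : 0 < κ) (x y z : X) :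
    max (d x y) (d x z) / (2 * κ) ≤ hyperRho d x y z := by
  have : Nonempty X := ⟨x⟩
  refine le_ciInf fun u => (div_le_iff₀' (by positivity)).2 (max_le ?_ ?_)
  · exact (h.le_two_mul_max_s10 hκ.le x y u).trans
      (mul_le_mul_of_nonneg_left (max_le_max le_rfl (le_max_left _ _)) (by positivity))
  · exact (h.le_two_mul_max_s10 hκ.le x z u).trans
      (mul_le_mul_of_nonneg_left (max_le_max le_rfl (le_max_right _ _)) (by positivity))

theorem ae_pos [MeasurableSpace X] {μ : Measure X} (h : IsQuasiMetric d κ) {x : X}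
    (hx : μ {x} = 0) : ∀ᵐ y ∂μ, 0 < d x y := by
  filter_upwards [compl_mem_ae_iff.2 hx] with y hy
  exact (h.1 x y).lt_of_ne' fun hxy => hy ((h.2.1 x y).1 hxy).symm

end IsQuasiMetric

theorem IsAhlfors.measure_singleton_eq_zero {X : Type*} [MeasurableSpace X] {d : X → X → ℝ}
    {μ : Measure X} {η a A : ℝ} (h : IsAhlfors d μ η a A) (hη : 0 < η) {x : X}
    (hxx : d x x = 0) : μ {x} = 0 := by
  have hlim : Tendsto (fun r : ℝ => ENNReal.ofReal (A * r ^ η)) (𝓝[>] 0) (𝓝 0) := by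
    have hpow := (Real.continuousAt_rpow_const 0 η (Or.inr hη.le)).tendsto.const_mul A
    rw [Real.zero_rpow hη.ne', mul_zero] at hpow
    simpa using ENNReal.tendsto_ofReal (hpow.mono_left nhdsWithin_le_nhds)
  refine le_antisymm (ge_of_tendsto hlim ?_) zero_le
  filter_upwards [self_mem_nhdsWithin] with r (hr : 0 < r)
  have hx : {x} ⊆ {y | d x y < r} := singleton_subset_iff.2 (show d x x < r by rwa [hxx])
  exact (measure_mono hx).trans (h x r hr).2

section AdicDecomposition

variable {X : Type*} {r : X → ℝ} {g : ℝ → ℝ≥0∞} {l : ℝ}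

theorem le_tsum_indicator_mul_indicator (hg : AntitoneOn g (Ioi 0)) (hl : 1 < l) {y z : X}
    (h : 0 < max (r y) (r z)) :
    g (max (r y) (r z)) ≤ ∑' k : ℤ, g (l ^ k) *
      {w | r w < l ^ (k + 1)}.indicator 1 y * {w | r w < l ^ (k + 1)}.indicator 1 z := by
  obtain ⟨k, hk_le, hk_lt⟩ := exists_mem_Ico_zpow h hl
  have hy : y ∈ {w | r w < l ^ (k + 1)} := (le_max_left _ _).trans_lt hk_lt
  have hz : z ∈ {w | r w < l ^ (k + 1)} := (le_max_right _ _).trans_lt hk_lt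
  calc g (max (r y) (r z)) ≤ g (l ^ k) := hg (zpow_pos (zero_lt_one.trans hl) k) h hk_le
    _ = g (l ^ k) * {w | r w < l ^ (k + 1)}.indicator 1 y *
          {w | r w < l ^ (k + 1)}.indicator 1 z := by
        simp [indicator_of_mem hy, indicator_of_mem hz]
    _ ≤ _ := ENNReal.le_tsum k

variable [MeasurableSpace X] {μ : Measure X}

theorem lintegral_lintegral_tsum_indicator_mul_indicator {ι : Type*} [Countable ι]
    {s : ι → Set X} (hs : ∀ i, MeasurableSet (s i)) (c : ι → ℝ≥0∞) :
    ∫⁻ y, ∫⁻ z, ∑' i, c i * (s i).indicator 1 y * (s i).indicator 1 z ∂μ ∂μ =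
      ∑' i, c i * μ (s i) ^ 2 := by
  have hind : ∀ i, Measurable ((s i).indicator (1 : X → ℝ≥0∞)) :=
    fun i => measurable_one.indicator (hs i)
  calc ∫⁻ y, ∫⁻ z, ∑' i, c i * (s i).indicator 1 y * (s i).indicator 1 z ∂μ ∂μ
      = ∫⁻ y, ∑' i, c i * (s i).indicator 1 y * μ (s i) ∂μ := by
        refine lintegral_congr fun y => ?_
        rw [lintegral_tsum fun i => ((hind i).const_mul _).aemeasurable]
        refine tsum_congr fun i => ?_
        rw [lintegral_const_mul _ (hind i), lintegral_indicator_one (hs i)]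
    _ = ∑' i, c i * μ (s i) ^ 2 := by
        rw [lintegral_tsum fun i => (((hind i).const_mul _).mul_const _).aemeasurable]
        refine tsum_congr fun i => ?_
        rw [lintegral_mul_const _ ((hind i).const_mul _), lintegral_const_mul _ (hind i),
          lintegral_indicator_one (hs i), sq, mul_assoc]

theorem lintegral_lintegral_max_le_tsum (hr : Measurable r) (hr_pos : ∀ᵐ y ∂μ, 0 < r y)
    (hg : AntitoneOn g (Ioi 0)) (hl : 1 < l) :
    ∫⁻ y, ∫⁻ z, g (max (r y) (r z)) ∂μ ∂μ ≤
      ∑' k : ℤ, g (l ^ k) * μ {y | r y < l ^ (k + 1)} ^ 2 := by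
  refine (lintegral_mono_ae ?_).trans_eq
    (lintegral_lintegral_tsum_indicator_mul_indicator
      (fun k => measurableSet_lt hr measurable_const) _)
  filter_upwards [hr_pos] with y hy
  exact lintegral_mono fun z =>
    le_tsum_indicator_mul_indicator hg hl (hy.trans_le (le_max_left _ _))

end AdicDecomposition

theorem setLIntegral_Ioc_ofReal_inv {α β : ℝ} (hα : 0 < α) (hαβ : α ≤ β) :
    ∫⁻ t in Ioc α β, ENNReal.ofReal t⁻¹ = ENNReal.ofReal (Real.log (β / α)) := by
  have hint : IntervalIntegrable (fun t : ℝ => t⁻¹) volume α β :=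
    intervalIntegrable_inv_iff.2 <| Or.inr fun h => by
      rw [uIcc_of_le hαβ] at h
      exact hα.not_ge h.1
  have hnonneg : 0 ≤ᵐ[volume.restrict (Ioc α β)] fun t : ℝ => t⁻¹ := by
    filter_upwards [ae_restrict_mem measurableSet_Ioc] with t ht
    exact inv_nonneg.2 (hα.trans ht.1).le
  rw [← integral_inv_of_pos hα (hα.trans_le hαβ), intervalIntegral.integral_of_le hαβ,
    ofReal_integral_eq_lintegral_ofReal hint.1 hnonneg]

theorem ofReal_mul_rpow_mul_log_le_setLIntegral_Ioc {φ : ℝ → ℝ} (hφ : AntitoneOn φ (Ioi 0))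
    {α β p : ℝ} (hα : 0 < α) (hαβ : α ≤ β) (hφβ : 0 ≤ φ β) (hp : 0 ≤ p) :
    ENNReal.ofReal (φ β * α ^ p * Real.log (β / α)) ≤
      ∫⁻ t in Ioc α β, ENNReal.ofReal (φ t * t ^ (p - 1)) := by
  have hc : 0 ≤ φ β * α ^ p := by positivity
  rw [ENNReal.ofReal_mul hc, ← setLIntegral_Ioc_ofReal_inv hα hαβ,
    ← lintegral_const_mul _ measurable_inv.ennreal_ofReal]
  refine setLIntegral_mono' measurableSet_Ioc fun t ⟨hαt, htβ⟩ => ?_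
  have ht : 0 < t := hα.trans hαt
  have hφt : φ β ≤ φ t := hφ ht (hα.trans_le hαβ) htβ
  rw [← ENNReal.ofReal_mul hc, Real.rpow_sub_one ht.ne', mul_div_assoc', div_eq_mul_inv]
  exact ENNReal.ofReal_le_ofReal <| mul_le_mul_of_nonneg_right
    (mul_le_mul hφt (Real.rpow_le_rpow hα.le hαt.le hp) (by positivity) (hφβ.trans hφt))
    (inv_nonneg.2 ht.le)

theorem tsum_setLIntegral_Ioc_le_setLIntegral_Ioi {ν : Measure ℝ} {f : ℤ → ℝ} (hf : Monotone f)
    (hf0 : ∀ k, 0 ≤ f k) (g : ℝ → ℝ≥0∞) :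
    ∑' k, ∫⁻ t in Ioc (f (k - 1)) (f k), g t ∂ν ≤ ∫⁻ t in Ioi 0, g t ∂ν := by
  have hdisj : Pairwise (Function.onFun Disjoint fun k => Ioc (f (k - 1)) (f k)) := by
    simpa only [Order.pred_eq_sub_one] using hf.pairwise_disjoint_on_Ioc_pred
  rw [← lintegral_iUnion (fun k => measurableSet_Ioc) hdisj]
  exact lintegral_mono_set (iUnion_subset fun k t ht => (hf0 (k - 1)).trans_lt ht.1)

theorem ofReal_mul_sq_le_mul_setLIntegral_Ioc {φ : ℝ → ℝ} (hφ : AntitoneOn φ (Ioi 0))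
    (hφ_nonneg : ∀ t, 0 < t → 0 ≤ φ t) {η A c l : ℝ} (hη : 0 ≤ η) (hc : 0 < c) (hl : 1 < l)
    (k : ℤ) {m : ℝ≥0∞} (hm : m ≤ ENNReal.ofReal (A * (l ^ (k + 1)) ^ η)) :
    ENNReal.ofReal (φ (l ^ k / c)) * m ^ 2 ≤
      ENNReal.ofReal (l ^ (4 * η) / Real.log l * (A ^ 2 * c ^ (2 * η))) *
        ∫⁻ t in Ioc (l ^ (k - 1) / c) (l ^ k / c), ENNReal.ofReal (φ t * t ^ (2 * η - 1)) := by
  set α := l ^ (k - 1) / c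
  set β := l ^ k / c
  set q := A * (l ^ (k + 1)) ^ η
  have hl0 : 0 < l := zero_lt_one.trans hl
  have hlog : 0 < Real.log l := Real.log_pos hl
  have hα : 0 < α := by positivity
  have hβα : β / α = l := by
    rw [div_div_div_cancel_right₀ hc.ne', ← zpow_sub₀ hl0.ne']
    simp
  have hαβ : α ≤ β := by
    rw [← div_le_div_iff_of_pos_right hα, div_self hα.ne', hβα]
    exact hl.le
  have hφβ : 0 ≤ φ β := hφ_nonneg β (hα.trans_le hαβ)
  have hm2 : m ^ 2 ≤ ENNReal.ofReal (q ^ 2) :=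
    calc m ^ 2 ≤ ENNReal.ofReal |q| ^ 2 := by
          gcongr
          exact hm.trans (ENNReal.ofReal_le_ofReal (le_abs_self q))
      _ = ENNReal.ofReal (q ^ 2) := by rw [← ENNReal.ofReal_pow (abs_nonneg q), sq_abs]
  have hpow : l ^ (4 * η) * (l ^ (k - 1)) ^ (2 * η) = ((l ^ (k + 1)) ^ η) ^ 2 := by
    simp only [← Real.rpow_intCast, ← Real.rpow_mul hl0.le, ← Real.rpow_natCast,
      ← Real.rpow_add hl0]
    push_cast
    ring_nf
  have hconst : φ β * q ^ 2 =
      l ^ (4 * η) / Real.log l * (A ^ 2 * c ^ (2 * η)) * (φ β * α ^ (2 * η) * Real.log l) := by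
    rw [mul_pow, ← hpow, Real.div_rpow (by positivity) hc.le]
    field_simp
  calc ENNReal.ofReal (φ β) * m ^ 2 ≤ ENNReal.ofReal (φ β) * ENNReal.ofReal (q ^ 2) := by
        gcongr
    _ = ENNReal.ofReal (l ^ (4 * η) / Real.log l * (A ^ 2 * c ^ (2 * η))) *
          ENNReal.ofReal (φ β * α ^ (2 * η) * Real.log l) := by
        rw [← ENNReal.ofReal_mul hφβ, hconst, ENNReal.ofReal_mul (by positivity)]
    _ ≤ _ := by
        gcongr
        rw [← hβα]
        exact ofReal_mul_rpow_mul_log_le_setLIntegral_Ioc hφ hα hαβ hφβ (by positivity)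

theorem statement10_general {X : Type*} [MeasurableSpace X]
    (d : X → X → ℝ) (κ : ℝ) (hκ : 1 ≤ κ) (hqm : IsQuasiMetric d κ)
    (hd_meas : Measurable fun p : X × X => d p.1 p.2)
    (μ : Measure X) (η : ℝ) (hη : 0 < η)
    (a A : ℝ) (hAhl : IsAhlfors d μ η a A)
    (φ : ℝ → ℝ) (hφ_nonneg : ∀ t, 0 < t → 0 ≤ φ t)
    (hφ_mono : ∀ s t, 0 < s → s ≤ t → φ t ≤ φ s)
    (l : ℝ) (hl : 1 < l) (x : X) :
    (∫⁻ y, ∫⁻ z, ENNReal.ofReal (φ (hyperRho d x y z)) ∂μ ∂μ) ≤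
      ENNReal.ofReal (l ^ (4 * η) / Real.log l * (A ^ 2 * (2 * κ) ^ (2 * η))) *
        ∫⁻ t in Set.Ioi (0 : ℝ), ENNReal.ofReal (φ t * t ^ (2 * η - 1)) := by
  have hc : 0 < 2 * κ := by linarith
  have hφ : AntitoneOn φ (Ioi 0) := fun s hs t _ hst => hφ_mono s t hs hst
  have hφc : AntitoneOn (fun m => ENNReal.ofReal (φ (m / (2 * κ)))) (Ioi 0) :=
    fun s hs t ht hst => ENNReal.ofReal_le_ofReal <|
      hφ (div_pos hs hc) (div_pos ht hc) (div_le_div_of_nonneg_right hst hc.le)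
  have hdx : Measurable (d x) := hd_meas.comp (measurable_const.prodMk measurable_id)
  have hpos : ∀ᵐ y ∂μ, 0 < d x y :=
    hqm.ae_pos (hAhl.measure_singleton_eq_zero hη ((hqm.2.1 x x).2 rfl))
  calc ∫⁻ y, ∫⁻ z, ENNReal.ofReal (φ (hyperRho d x y z)) ∂μ ∂μ
      ≤ ∫⁻ y, ∫⁻ z, ENNReal.ofReal (φ (max (d x y) (d x z) / (2 * κ))) ∂μ ∂μ := by
        refine lintegral_mono_ae ?_
        filter_upwards [hpos] with y hy
        refine lintegral_mono fun z => ENNReal.ofReal_le_ofReal (hφ_mono _ _ ?_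
          (hqm.max_div_le_hyperRho (by linarith) x y z))
        exact div_pos (hy.trans_le (le_max_left _ _)) hc
    _ ≤ ∑' k : ℤ, ENNReal.ofReal (φ (l ^ k / (2 * κ))) * μ {y | d x y < l ^ (k + 1)} ^ 2 :=
        lintegral_lintegral_max_le_tsum hdx hpos hφc hl
    _ ≤ ∑' k : ℤ, ENNReal.ofReal (l ^ (4 * η) / Real.log l * (A ^ 2 * (2 * κ) ^ (2 * η))) *
          ∫⁻ t in Ioc (l ^ (k - 1) / (2 * κ)) (l ^ k / (2 * κ)),
            ENNReal.ofReal (φ t * t ^ (2 * η - 1)) :=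
        ENNReal.tsum_le_tsum fun k => ofReal_mul_sq_le_mul_setLIntegral_Ioc hφ hφ_nonneg hη.le hc
          hl k (hAhl x _ (zpow_pos (zero_lt_one.trans hl) _)).2
    _ ≤ _ := by
        rw [ENNReal.tsum_mul_left]
        gcongr
        exact tsum_setLIntegral_Ioc_le_setLIntegral_Ioi
          (fun i j hij => div_le_div_of_nonneg_right (zpow_le_zpow_right₀ hl.le hij) hc.le)
          (fun k => by positivity) _

/-- Upper bound: for every `λ > 1` and every `x`,
`∬ φ(ρ(x,y,z)) dμ dμ ≤ (λ^{4η}/log λ) A² (2κ)^{2η} ∫₀^∞ φ(t) t^{2η-1} dt`. -/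
theorem statement10 {X : Type*} [MeasurableSpace X]
    (d : X → X → ℝ) (κ : ℝ) (hκ : 1 ≤ κ) (hqm : IsQuasiMetric d κ)
    (hd_meas : Measurable fun p : X × X => d p.1 p.2)
    (μ : Measure X) (η : ℝ) (hη : 0 < η)
    (a A : ℝ) (ha : 0 < a) (haA : a ≤ A) (hAhl : IsAhlfors d μ η a A)
    (φ : ℝ → ℝ) (hφ_nonneg : ∀ t, 0 < t → 0 ≤ φ t)
    (hφ_mono : ∀ s t, 0 < s → s ≤ t → φ t ≤ φ s)
    (l : ℝ) (hl : 1 < l) (x : X) :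
    (∫⁻ y, ∫⁻ z, ENNReal.ofReal (φ (hyperRho d x y z)) ∂μ ∂μ) ≤
      ENNReal.ofReal (l ^ (4 * η) / Real.log l * (A ^ 2 * (2 * κ) ^ (2 * η))) *
        ∫⁻ t in Set.Ioi (0 : ℝ), ENNReal.ofReal (φ t * t ^ (2 * η - 1)) :=
  statement10_general d κ hκ hqm hd_meas μ η hη a A hAhl φ hφ_nonneg hφ_mono l hl x
end

section
/- Let (X,d,μ) be an η-Ahlfors regular quasi-metric measure space with η > 0 and triangular constant κ ≥ 1, and let ρ be the third order hypermetric induced by d. Then for every x ∈ X and every β > 0, the integral ∬_{{(y,z) ∈ X×X : ρ(x,y,z) ≥ 1}} ρ(x,y,z)^{−β} dμ(y) dμ(z) is finite if and only if β > 2η. -/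
/-!
The hypermetric is comparable to `m(y, z) = max (d x y) (d x z)`, namely `ρ ≤ m ≤ 2κρ`, and the
sublevel sets `{m < r}` are products of balls, so by Ahlfors regularity their `μ × μ`-measure is
comparable to `r ^ (2η)`. For any `g` whose distribution function grows like `r ^ s`, a dyadic
decomposition shows that `∫_{g ≥ 1} g ^ (-β)` is finite when `s < β`; when `β ≤ s`, the annuli
`C ^ (n + 1) ≤ g < C ^ (n + 2)`, for `C` so large that each carries measure `≳ C ^ ((n + 1) s)`,
all contribute the same positive amount.
-/

open MeasureTheory ENNReal

open Set Filter

theorem ENNReal.rpow_neg_le_mul_rpow_neg {x y c : ℝ≥0∞} {β : ℝ} (hβ : 0 ≤ β) (hc₀ : c ≠ 0)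
    (hc : c ≠ ⊤) (h : x ≤ c * y) : y ^ (-β) ≤ c ^ β * x ^ (-β) := by
  have hcβ₀ : c ^ β ≠ 0 := (rpow_pos (pos_iff_ne_zero.2 hc₀) hc).ne'
  have hcβ : c ^ β ≠ ⊤ := rpow_ne_top_of_nonneg hβ hc
  have hxy : x ^ β / c ^ β ≤ y ^ β := by
    rw [← div_rpow_of_nonneg _ _ hβ]
    exact rpow_le_rpow (ENNReal.div_le_of_le_mul' h) hβ
  rw [rpow_neg, rpow_neg, ← div_eq_mul_inv, ← ENNReal.inv_div (.inl hcβ) (.inl hcβ₀)]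
  exact ENNReal.inv_le_inv.2 hxy

section DistributionFunction

variable {Y : Type*} [MeasurableSpace Y] {ν : Measure Y} {g : Y → ℝ}

theorem setLIntegral_rpow_neg_lt_top_of_measure_lt_le (hg : Measurable g) {C s β : ℝ}
    (hν : ∀ r, 0 < r → ν {y | g y < r} ≤ ENNReal.ofReal (C * r ^ s)) (hβ : 0 ≤ β)
    (hsβ : s < β) :
    ∫⁻ y in {y | 1 ≤ g y}, ENNReal.ofReal (g y) ^ (-β) ∂ν < ⊤ := by
  set T : ℕ → Set Y := fun n => g ⁻¹' Ico (2 ^ n) (2 ^ (n + 1))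
  have hcover : {y | 1 ≤ g y} ⊆ ⋃ n, T n := fun y hy =>
    mem_iUnion.2 (exists_nat_pow_near hy one_lt_two)
  have hpiece (n : ℕ) : ∫⁻ y in T n, ENNReal.ofReal (g y) ^ (-β) ∂ν ≤
      ENNReal.ofReal (C * 2 ^ s) * ENNReal.ofReal (2 ^ (s - β)) ^ n := by
    have h2n : (0 : ℝ) < 2 ^ n := by positivity
    calc ∫⁻ y in T n, ENNReal.ofReal (g y) ^ (-β) ∂ν
        ≤ ∫⁻ _ in T n, ENNReal.ofReal (((2 : ℝ) ^ n) ^ (-β)) ∂ν := by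
          refine setLIntegral_mono' (hg measurableSet_Ico) fun y hy => ?_
          rw [ofReal_rpow_of_pos (h2n.trans_le hy.1)]
          exact ofReal_le_ofReal (Real.rpow_le_rpow_of_nonpos h2n hy.1 (neg_nonpos.2 hβ))
      _ = ENNReal.ofReal (((2 : ℝ) ^ n) ^ (-β)) * ν (T n) := setLIntegral_const _ _
      _ ≤ ENNReal.ofReal (((2 : ℝ) ^ n) ^ (-β)) * ENNReal.ofReal (C * ((2 : ℝ) ^ (n + 1)) ^ s) := by
          gcongr
          exact (measure_mono fun y hy => hy.2).trans (hν _ (by positivity))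
      _ = ENNReal.ofReal (C * 2 ^ s) * ENNReal.ofReal (2 ^ (s - β)) ^ n := by
          rw [← ofReal_mul (by positivity), ← ofReal_pow (by positivity),
            ← ofReal_mul' (by positivity)]
          congr 1
          rw [← Real.rpow_pow_comm zero_le_two, ← Real.rpow_pow_comm zero_le_two,
            Real.rpow_sub zero_lt_two, Real.rpow_neg zero_le_two]
          ring
  have hq : ENNReal.ofReal (2 ^ (s - β)) < 1 :=
    ofReal_lt_one.2 (Real.rpow_lt_one_of_one_lt_of_neg one_lt_two (sub_neg.2 hsβ))
  calc ∫⁻ y in {y | 1 ≤ g y}, ENNReal.ofReal (g y) ^ (-β) ∂ν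
      ≤ ∫⁻ y in ⋃ n, T n, ENNReal.ofReal (g y) ^ (-β) ∂ν := lintegral_mono_set hcover
    _ ≤ ∑' n, ∫⁻ y in T n, ENNReal.ofReal (g y) ^ (-β) ∂ν := lintegral_iUnion_le _ _
    _ ≤ ∑' n, ENNReal.ofReal (C * 2 ^ s) * ENNReal.ofReal (2 ^ (s - β)) ^ n :=
        ENNReal.tsum_le_tsum hpiece
    _ = ENNReal.ofReal (C * 2 ^ s) * (1 - ENNReal.ofReal (2 ^ (s - β)))⁻¹ := by
        rw [ENNReal.tsum_mul_left, ENNReal.tsum_geometric]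
    _ < ⊤ := mul_lt_top ofReal_lt_top (inv_lt_top.2 (tsub_pos_of_lt hq))

theorem ofReal_le_measure_preimage_Ico {a A s r R : ℝ}
    (hlow : ENNReal.ofReal (a * R ^ s) ≤ ν {y | g y < R})
    (hup : ν {y | g y < r} ≤ ENNReal.ofReal (A * r ^ s))
    (ha : 0 ≤ a) (hA : 0 ≤ A) (hr : 0 ≤ r) (hrR : (a + A) * r ^ s ≤ a * R ^ s) :
    ENNReal.ofReal (a * r ^ s) ≤ ν (g ⁻¹' Ico r R) := by
  have hsplit : {y | g y < R} ⊆ g ⁻¹' Ico r R ∪ {y | g y < r} := fun y hy => by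
    by_cases h : g y < r
    · exact .inr h
    · exact .inl ⟨not_lt.1 h, hy⟩
  rw [← ENNReal.add_le_add_iff_right (ofReal_ne_top (r := A * r ^ s)),
    ← ofReal_add (by positivity) (by positivity)]
  calc ENNReal.ofReal (a * r ^ s + A * r ^ s) ≤ ENNReal.ofReal (a * R ^ s) :=
        ofReal_le_ofReal (by linarith)
    _ ≤ ν {y | g y < R} := hlow
    _ ≤ ν (g ⁻¹' Ico r R) + ν {y | g y < r} := (measure_mono hsplit).trans (measure_union_le _ _)
    _ ≤ ν (g ⁻¹' Ico r R) + ENNReal.ofReal (A * r ^ s) := by gcongr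

theorem setLIntegral_rpow_neg_eq_top_of_measure_lt {a A s β : ℝ} (hg : Measurable g)
    (hlow : ∀ r, 0 < r → ENNReal.ofReal (a * r ^ s) ≤ ν {y | g y < r})
    (hup : ∀ r, 0 < r → ν {y | g y < r} ≤ ENNReal.ofReal (A * r ^ s))
    (ha : 0 < a) (hA : 0 ≤ A) (hs : 0 < s) (hβ : 0 ≤ β) (hβs : β ≤ s) (R : ℝ) :
    ∫⁻ y in {y | R ≤ g y}, ENNReal.ofReal (g y) ^ (-β) ∂ν = ⊤ := by
  obtain ⟨C, hCs, hCR⟩ := (((tendsto_rpow_atTop hs).eventually_ge_atTop ((a + A) / a)).and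
    (eventually_ge_atTop (max 1 R))).exists
  have hC1 : 1 ≤ C := (le_max_left _ _).trans hCR
  have hC0 : 0 < C := one_pos.trans_le hC1
  set S : ℕ → Set Y := fun n => g ⁻¹' Ico (C ^ (n + 1)) (C ^ (n + 1 + 1))
  have hS : ∀ n, MeasurableSet (S n) := fun n => hg measurableSet_Ico
  have hdisj : Pairwise (Function.onFun Disjoint S) := fun m n hmn =>
    ((pow_right_mono₀ hC1).comp (add_left_mono (a := 1))).pairwise_disjoint_on_Ico_succ hmn
      |>.preimage g
  have hsub : (⋃ n, S n) ⊆ {y | R ≤ g y} := iUnion_subset fun n y hy =>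
    (le_max_right _ _).trans (hCR.trans ((le_self_pow₀ hC1 n.succ_ne_zero).trans hy.1))
  have haC : a + A ≤ a * C ^ s := (div_le_iff₀' ha).1 hCs
  have hpiece (n : ℕ) :
      ENNReal.ofReal (a * C ^ (-β)) ≤ ∫⁻ y in S n, ENNReal.ofReal (g y) ^ (-β) ∂ν := by
    have hr : 0 < C ^ (n + 1) := by positivity
    have hpow (t : ℝ) : (C ^ (n + 1 + 1)) ^ t = (C ^ (n + 1)) ^ t * C ^ t := by
      rw [pow_succ, Real.mul_rpow hr.le hC0.le]
    calc ENNReal.ofReal (a * C ^ (-β))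
        ≤ ENNReal.ofReal ((C ^ (n + 1 + 1)) ^ (-β)) * ENNReal.ofReal (a * (C ^ (n + 1)) ^ s) := by
          rw [← ofReal_mul (by positivity)]
          refine ofReal_le_ofReal ?_
          have hsβ : (C ^ (n + 1)) ^ β ≤ (C ^ (n + 1)) ^ s :=
            Real.rpow_le_rpow_of_exponent_le (one_le_pow₀ hC1) hβs
          have hinv : (C ^ (n + 1)) ^ (-β) * (C ^ (n + 1)) ^ β = 1 := by
            rw [Real.rpow_neg hr.le, inv_mul_cancel₀ (by positivity)]
          calc a * C ^ (-β) = (C ^ (n + 1)) ^ (-β) * C ^ (-β) * (a * (C ^ (n + 1)) ^ β) := by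
                linear_combination (-(a * C ^ (-β))) * hinv
            _ ≤ _ := by rw [hpow]; gcongr
      _ ≤ ENNReal.ofReal ((C ^ (n + 1 + 1)) ^ (-β)) * ν (S n) := by
          gcongr
          refine ofReal_le_measure_preimage_Ico (hlow _ (by positivity)) (hup _ hr) ha.le hA
            hr.le ?_
          rw [hpow]
          nlinarith [Real.rpow_nonneg hr.le s]
      _ = ∫⁻ _ in S n, ENNReal.ofReal ((C ^ (n + 1 + 1)) ^ (-β)) ∂ν := (setLIntegral_const _ _).symm
      _ ≤ ∫⁻ y in S n, ENNReal.ofReal (g y) ^ (-β) ∂ν := by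
          refine setLIntegral_mono' (hS n) fun y hy => ?_
          rw [ofReal_rpow_of_pos (hr.trans_le hy.1)]
          exact ofReal_le_ofReal
            (Real.rpow_le_rpow_of_nonpos (hr.trans_le hy.1) hy.2.le (neg_nonpos.2 hβ))
  refine top_le_iff.1 ?_
  calc ⊤ = ∑' _ : ℕ, ENNReal.ofReal (a * C ^ (-β)) :=
        (tsum_const_eq_top_of_ne_zero (ofReal_pos.2 (by positivity)).ne').symm
    _ ≤ ∑' n, ∫⁻ y in S n, ENNReal.ofReal (g y) ^ (-β) ∂ν := ENNReal.tsum_le_tsum hpiece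
    _ = ∫⁻ y in ⋃ n, S n, ENNReal.ofReal (g y) ^ (-β) ∂ν := (lintegral_iUnion hS hdisj _).symm
    _ ≤ _ := lintegral_mono_set hsub

end DistributionFunction

namespace IsQuasiMetric

variable {X : Type*} {d : X → X → ℝ} {κ : ℝ}

theorem hyperRho_le_max (hd : IsQuasiMetric d κ) (x y z : X) :
    hyperRho d x y z ≤ max (d x y) (d x z) := by
  obtain ⟨hd₀, hd_eq, hd_symm, -⟩ := hd
  have hbdd : BddBelow (range fun u => max (d x u) (max (d y u) (d z u))) :=
    ⟨0, forall_mem_range.2 fun u => (hd₀ x u).trans (le_max_left _ _)⟩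
  refine (ciInf_le hbdd x).trans_eq ?_
  rw [(hd_eq x x).2 rfl, hd_symm y, hd_symm z, max_eq_right (le_max_of_le_left (hd₀ x y))]

theorem max_le_mul_hyperRho (hd : IsQuasiMetric d κ) (hκ : 0 ≤ κ) (x y z : X) :
    max (d x y) (d x z) ≤ 2 * κ * hyperRho d x y z := by
  obtain ⟨-, -, hd_symm, hd_tri⟩ := hd
  have : Nonempty X := ⟨x⟩
  rw [hyperRho, Real.mul_iInf_of_nonneg (by positivity)]
  refine le_ciInf fun u => ?_
  set M := max (d x u) (max (d y u) (d z u))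
  have hx : d x u ≤ M := le_max_left _ _
  have hbound (w : X) (hw : d w u ≤ M) : d x w ≤ 2 * κ * M :=
    calc d x w ≤ κ * (d x u + d w u) := hd_symm w u ▸ hd_tri x u w
      _ ≤ κ * (M + M) := by gcongr
      _ = 2 * κ * M := by ring
  exact max_le (hbound y (le_max_of_le_right (le_max_left _ _)))
    (hbound z (le_max_of_le_right (le_max_right _ _)))

end IsQuasiMetric

theorem setOf_max_lt_eq_prod {X : Type*} (d : X → X → ℝ) (x : X) (r : ℝ) :
    {p : X × X | max (d x p.1) (d x p.2) < r} = {y | d x y < r} ×ˢ {y | d x y < r} := by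
  ext p; simp

namespace IsAhlfors

variable {X : Type*} [MeasurableSpace X] {d : X → X → ℝ} {μ : Measure X} {η a A : ℝ}

theorem sigmaFinite_s13 (h : IsAhlfors d μ η a A) (x : X) : SigmaFinite μ := by
  refine ⟨⟨⟨fun n : ℕ => {y | d x y < n + 1}, fun _ => trivial,
    fun n => (h x _ (by positivity)).2.trans_lt ofReal_lt_top, ?_⟩⟩⟩
  refine iUnion_eq_univ_iff.2 fun y => ?_
  obtain ⟨n, hn⟩ := exists_nat_gt (d x y)
  exact ⟨n, show d x y < n + 1 by linarith⟩

theorem measure_prod_max_lt_le (h : IsAhlfors d μ η a A) (hA : 0 ≤ A) (x : X) {r : ℝ} (hr : 0 < r) :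
    μ.prod μ {p | max (d x p.1) (d x p.2) < r} ≤ ENNReal.ofReal (A ^ 2 * r ^ (2 * η)) := by
  rw [setOf_max_lt_eq_prod, mul_comm 2 η, Real.rpow_mul hr.le, Real.rpow_two, ← mul_pow,
    ofReal_pow (by positivity), sq]
  exact (Measure.prod_prod_le _ _).trans (mul_le_mul' (h x r hr).2 (h x r hr).2)

theorem ofReal_le_measure_prod_max_lt [SFinite μ] (h : IsAhlfors d μ η a A) (ha : 0 ≤ a) (x : X)
    {r : ℝ} (hr : 0 < r) :
    ENNReal.ofReal (a ^ 2 * r ^ (2 * η)) ≤ μ.prod μ {p | max (d x p.1) (d x p.2) < r} := by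
  rw [setOf_max_lt_eq_prod, mul_comm 2 η, Real.rpow_mul hr.le, Real.rpow_two, ← mul_pow,
    ofReal_pow (by positivity), sq, Measure.prod_prod]
  exact mul_le_mul' (h x r hr).1 (h x r hr).1

end IsAhlfors

/-- `∬_{ρ(x,y,z)≥1} ρ(x,y,z)^{-β} dμ dμ` is finite if and only if `β > 2η`. -/
theorem statement13 {X : Type*} [MeasurableSpace X]
    (d : X → X → ℝ) (κ : ℝ) (hκ : 1 ≤ κ) (hqm : IsQuasiMetric d κ)
    (hd_meas : Measurable fun p : X × X => d p.1 p.2)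
    (μ : Measure X) (η : ℝ) (hη : 0 < η)
    (a A : ℝ) (ha : 0 < a) (haA : a ≤ A) (hAhl : IsAhlfors d μ η a A)
    (x : X) (β : ℝ) (hβ : 0 < β) :
    (∫⁻ p in {p : X × X | 1 ≤ hyperRho d x p.1 p.2},
        (ENNReal.ofReal (hyperRho d x p.1 p.2)) ^ (-β) ∂(μ.prod μ)) < ⊤ ↔
      2 * η < β := by
  have hκ₀ : 0 < κ := one_pos.trans_le hκ
  have h2κ : 0 < 2 * κ := by positivity
  have := hAhl.sigmaFinite_s13 x
  set m : X × X → ℝ := fun p => max (d x p.1) (d x p.2)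
  have hm : Measurable m := (hd_meas.comp (measurable_const.prodMk measurable_fst)).max
    (hd_meas.comp (measurable_const.prodMk measurable_snd))
  have hup (r : ℝ) (hr : 0 < r) : μ.prod μ {p | m p < r} ≤ ENNReal.ofReal (A ^ 2 * r ^ (2 * η)) :=
    hAhl.measure_prod_max_lt_le (ha.le.trans haA) x hr
  constructor
  · intro hfin
    by_contra! hβη
    have hsub : {p | 2 * κ ≤ m p} ⊆ {p : X × X | 1 ≤ hyperRho d x p.1 p.2} := fun p hp =>
      (le_mul_iff_one_le_right h2κ).1 (hp.trans (hqm.max_le_mul_hyperRho hκ₀.le x p.1 p.2))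
    refine hfin.ne (top_le_iff.1 ?_)
    calc ⊤ = ∫⁻ p in {p | 2 * κ ≤ m p}, ENNReal.ofReal (m p) ^ (-β) ∂(μ.prod μ) :=
          (setLIntegral_rpow_neg_eq_top_of_measure_lt hm
            (fun r hr => hAhl.ofReal_le_measure_prod_max_lt ha.le x hr) hup (by positivity)
            (by positivity) (by positivity) hβ.le hβη _).symm
      _ ≤ _ := lintegral_mono' (Measure.restrict_mono hsub le_rfl) fun p => by
          rw [rpow_neg, rpow_neg]
          exact ENNReal.inv_le_inv.2
            (rpow_le_rpow (ofReal_le_ofReal (hqm.hyperRho_le_max x p.1 p.2)) hβ.le)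
  · intro hβη
    have hsub : {p : X × X | 1 ≤ hyperRho d x p.1 p.2} ⊆ {p | 1 ≤ m p} := fun p hp =>
      hp.trans (hqm.hyperRho_le_max x p.1 p.2)
    calc ∫⁻ p in {p : X × X | 1 ≤ hyperRho d x p.1 p.2},
          ENNReal.ofReal (hyperRho d x p.1 p.2) ^ (-β) ∂(μ.prod μ)
        ≤ ∫⁻ p in {p | 1 ≤ m p},
            ENNReal.ofReal (2 * κ) ^ β * ENNReal.ofReal (m p) ^ (-β) ∂(μ.prod μ) :=
          lintegral_mono' (Measure.restrict_mono hsub le_rfl) fun p =>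
            rpow_neg_le_mul_rpow_neg hβ.le (ofReal_pos.2 h2κ).ne' ofReal_ne_top <| by
              rw [← ofReal_mul h2κ.le]
              exact ofReal_le_ofReal (hqm.max_le_mul_hyperRho hκ₀.le x p.1 p.2)
      _ = ENNReal.ofReal (2 * κ) ^ β *
            ∫⁻ p in {p | 1 ≤ m p}, ENNReal.ofReal (m p) ^ (-β) ∂(μ.prod μ) :=
          lintegral_const_mul' _ _ (rpow_ne_top_of_nonneg hβ.le ofReal_ne_top)
      _ < ⊤ := mul_lt_top (rpow_lt_top_of_nonneg hβ.le ofReal_ne_top)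
          (setLIntegral_rpow_neg_lt_top_of_measure_lt_le hm hup hβ.le hβη)
end

section
/- Let (X,d,μ) be an η-Ahlfors regular quasi-metric measure space with η > 0, triangular constant κ ≥ 1 and Ahlfors constants 0 < a ≤ A < ∞, and let ρ be the third order hypermetric induced by d. Then for every x ∈ X and every r > 0, a² r^{2η} ≤ (μ × μ)(E(x,r)) ≤ (2κ)^{2η} A² r^{2η}, where E(x,r) = {(y,z) ∈ X × X : ρ(x,y,z) < r}. -/
open MeasureTheory ENNReal

/-- `a² r^{2η} ≤ (μ×μ)(E(x,r)) ≤ (2κ)^{2η} A² r^{2η}`, where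
`E(x,r) = {(y,z) : ρ(x,y,z) < r}`. -/
theorem statement16 {X : Type*} [MeasurableSpace X]
    (d : X → X → ℝ) (κ : ℝ) (hκ : 1 ≤ κ) (hqm : IsQuasiMetric d κ)
    (hd_meas : Measurable fun p : X × X => d p.1 p.2)
    (μ : Measure X) (η : ℝ) (hη : 0 < η)
    (a A : ℝ) (ha : 0 < a) (haA : a ≤ A) (hAhl : IsAhlfors d μ η a A)
    (x : X) (r : ℝ) (hr : 0 < r) :
    ENNReal.ofReal (a ^ 2 * r ^ (2 * η)) ≤
        (μ.prod μ) {p : X × X | hyperRho d x p.1 p.2 < r} ∧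
      (μ.prod μ) {p : X × X | hyperRho d x p.1 p.2 < r} ≤
        ENNReal.ofReal ((2 * κ) ^ (2 * η) * A ^ 2 * r ^ (2 * η)) := by
  haveI : Nonempty X := ⟨x⟩
  obtain ⟨hnn, heq, hsymm, htri⟩ := hqm
  haveI : SigmaFinite μ := by
    refine ⟨⟨⟨fun n => {y | d x y < n + 1}, fun _ => Set.mem_univ _, fun n => ?_, ?_⟩⟩⟩
    · have hn : (0:ℝ) < n + 1 := by positivity
      exact lt_of_le_of_lt (hAhl x (n + 1) hn).2 ENNReal.ofReal_lt_top
    · ext y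
      simp only [Set.mem_iUnion, Set.mem_setOf_eq, Set.mem_univ, iff_true]
      obtain ⟨n, hn⟩ := exists_nat_gt (d x y)
      exact ⟨n, hn.trans (by linarith)⟩
  have hbdd : ∀ y z : X,
      BddBelow (Set.range fun u => max (d x u) (max (d y u) (d z u))) := by
    intro y z
    exact ⟨0, by rintro _ ⟨u, rfl⟩; exact le_max_of_le_left (hnn x u)⟩
  constructor
  · have hsub : {y | d x y < r} ×ˢ {y | d x y < r} ⊆
        {p : X × X | hyperRho d x p.1 p.2 < r} := by
      rintro ⟨y, z⟩ ⟨hy, hz⟩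
      have hle : hyperRho d x y z ≤ max (d x x) (max (d y x) (d z x)) :=
        ciInf_le (hbdd y z) x
      have hxx : d x x = 0 := (heq x x).mpr rfl
      have : max (d x x) (max (d y x) (d z x)) < r := by
        rw [hxx, hsymm y x, hsymm z x]
        simp only [max_lt_iff]
        exact ⟨hr, hy, hz⟩
      exact lt_of_le_of_lt hle this
    calc ENNReal.ofReal (a ^ 2 * r ^ (2 * η))
        = ENNReal.ofReal (a * r ^ η) * ENNReal.ofReal (a * r ^ η) := by
          rw [← ENNReal.ofReal_mul (by positivity)]
          congr 1
          have h3 : r ^ (2 * η) = (r ^ η) ^ (2:ℕ) := by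
            rw [← Real.rpow_natCast (r ^ η) 2, ← Real.rpow_mul hr.le]
            norm_num [mul_comm]
          rw [h3]; ring
      _ ≤ μ {y | d x y < r} * μ {y | d x y < r} :=
          mul_le_mul' (hAhl x r hr).1 (hAhl x r hr).1
      _ = μ.prod μ ({y | d x y < r} ×ˢ {y | d x y < r}) := (Measure.prod_prod _ _).symm
      _ ≤ _ := measure_mono hsub
  · have h2κr : (0:ℝ) < 2 * κ * r := by nlinarith
    have hsub : {p : X × X | hyperRho d x p.1 p.2 < r} ⊆
        {y | d x y < 2 * κ * r} ×ˢ {y | d x y < 2 * κ * r} := by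
      rintro ⟨y, z⟩ hp
      simp only [Set.mem_setOf_eq, hyperRho] at hp
      obtain ⟨u, hu⟩ := exists_lt_of_ciInf_lt hp
      simp only [max_lt_iff] at hu
      obtain ⟨h1, h2, h3⟩ := hu
      constructor
      · show d x y < 2 * κ * r
        calc d x y ≤ κ * (d x u + d u y) := htri x u y
          _ = κ * (d x u + d y u) := by rw [hsymm u y]
          _ < κ * (r + r) := mul_lt_mul_of_pos_left (by linarith) (by linarith)
          _ = 2 * κ * r := by ring
      · show d x z < 2 * κ * r
        calc d x z ≤ κ * (d x u + d u z) := htri x u z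
          _ = κ * (d x u + d z u) := by rw [hsymm u z]
          _ < κ * (r + r) := mul_lt_mul_of_pos_left (by linarith) (by linarith)
          _ = 2 * κ * r := by ring
    calc μ.prod μ {p : X × X | hyperRho d x p.1 p.2 < r}
        ≤ μ.prod μ ({y | d x y < 2 * κ * r} ×ˢ {y | d x y < 2 * κ * r}) :=
          measure_mono hsub
      _ = μ {y | d x y < 2 * κ * r} * μ {y | d x y < 2 * κ * r} :=
          Measure.prod_prod _ _
      _ ≤ ENNReal.ofReal (A * (2 * κ * r) ^ η) * ENNReal.ofReal (A * (2 * κ * r) ^ η) :=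
          mul_le_mul' (hAhl x _ h2κr).2 (hAhl x _ h2κr).2
      _ = ENNReal.ofReal ((2 * κ) ^ (2 * η) * A ^ 2 * r ^ (2 * η)) := by
          rw [← ENNReal.ofReal_mul
            (mul_nonneg (by linarith) (Real.rpow_nonneg h2κr.le η))]
          congr 1
          have h1 : (2 * κ * r) ^ η = (2 * κ) ^ η * r ^ η :=
            Real.mul_rpow (by linarith) hr.le
          have h2 : (2 * κ) ^ (2 * η) = ((2 * κ) ^ η) ^ (2:ℕ) := by
            rw [← Real.rpow_natCast ((2 * κ) ^ η) 2, ← Real.rpow_mul (by linarith)]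
            norm_num [mul_comm]
          have h3 : r ^ (2 * η) = (r ^ η) ^ (2:ℕ) := by
            rw [← Real.rpow_natCast (r ^ η) 2, ← Real.rpow_mul hr.le]
            norm_num [mul_comm]
          rw [h1, h2, h3]; ring
end

section
/- Let (X,d) be a quasi-metric space with triangular constant κ ≥ 1 and let ρ be the third order hypermetric induced by d. Then for every x ∈ X, every r > 0 and every λ > 2κ, the set difference E(x,λr) \ E(x,r) contains [B_d(x,λr) × B_d(x,λr)] \ [B_d(x,2κr) × B_d(x,2κr)], where E(x,r) = {(y,z) ∈ X × X : ρ(x,y,z) < r} and B_d(x,r) = {y ∈ X : d(x,y) < r}. -/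
open MeasureTheory ENNReal

/-- For `λ > 2κ`,
`E(x,λr) \ E(x,r) ⊇ [B_d(x,λr) × B_d(x,λr)] \ [B_d(x,2κr) × B_d(x,2κr)]`. -/
theorem statement17 {X : Type*} (d : X → X → ℝ) (κ : ℝ) (hκ : 1 ≤ κ)
    (hqm : IsQuasiMetric d κ) (x : X) (r : ℝ) (hr : 0 < r)
    (l : ℝ) (hl : 2 * κ < l) :
    ({y : X | d x y < l * r} ×ˢ {y : X | d x y < l * r}) \
        ({y : X | d x y < 2 * κ * r} ×ˢ {y : X | d x y < 2 * κ * r}) ⊆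
      {p : X × X | hyperRho d x p.1 p.2 < l * r} \
        {p : X × X | hyperRho d x p.1 p.2 < r} := by
  obtain ⟨hnn, heq, hsymm, htri⟩ := hqm
  have hκ0 : (0:ℝ) < κ := lt_of_lt_of_le one_pos hκ
  rintro ⟨y, z⟩ ⟨⟨hy, hz⟩, hnot⟩
  simp only [Set.mem_prod, Set.mem_setOf_eq] at hy hz hnot
  have hbdd : BddBelow (Set.range fun u => max (d x u) (max (d y u) (d z u))) := by
    refine ⟨0, ?_⟩
    rintro _ ⟨u, rfl⟩
    exact le_max_of_le_left (hnn x u)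
  constructor
  · show hyperRho d x y z < l * r
    have h1 : hyperRho d x y z ≤ max (d x x) (max (d y x) (d z x)) := ciInf_le hbdd x
    have hxx : d x x = 0 := (heq x x).mpr rfl
    refine lt_of_le_of_lt h1 ?_
    rw [hxx, hsymm y x, hsymm z x]
    have h0 : (0:ℝ) < l * r := by nlinarith
    simp [max_lt_iff, *]
  · show ¬ hyperRho d x y z < r
    rw [not_lt]
    have hwy : 2 * κ * r ≤ d x y ∨ 2 * κ * r ≤ d x z := by
      by_contra h
      push_neg at h
      exact hnot ⟨h.1, h.2⟩
    have : Nonempty X := ⟨x⟩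
    refine le_ciInf fun u => ?_
    rcases hwy with hw | hw
    · have h2 : d x y ≤ κ * (d x u + d u y) := htri x u y
      rw [hsymm u y] at h2
      have : r ≤ max (d x u) (d y u) := by
        by_contra h
        push_neg at h
        rw [max_lt_iff] at h
        nlinarith [h.1, h.2]
      exact this.trans (max_le_max le_rfl (le_max_left _ _))
    · have h2 : d x z ≤ κ * (d x u + d u z) := htri x u z
      rw [hsymm u z] at h2
      have : r ≤ max (d x u) (d z u) := by
        by_contra h
        push_neg at h
        rw [max_lt_iff] at h
        nlinarith [h.1, h.2]
      refine this.trans (max_le_max le_rfl (le_max_right _ _))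
end
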